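/- For every integer d ≥ 7 with d ≠ 27, there exists an IDF prime for the pair (d, 3); equivalently, there exists a prime p > 3 such that either p divides d, or p divides d−2 with v_p(d−2) odd, or p divides d−3 with 3 not dividing v_p(d−3). -/

import Mathlib

open Finset Function

/-- The coefficient `b_i` of `z^(d-i)` in the normalized dynamical Belyi polynomial
`B_{d,k}`. -/
def belyiCoeff (d k i : ℕ) : ℚ :=
  ((-1 : ℚ) ^ (k - i) / ((k - i).factorial * i.factorial)) *
    ∏ j ∈ (Finset.range (k + 1)).erase i, ((d : ℚ) - (j : ℚ))

/-- The normalized dynamical Belyi polynomial `B_{d,k}` as a function on `ℚ`. -/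
def belyi (d k : ℕ) (z : ℚ) : ℚ :=
  ∑ i ∈ Finset.range (k + 1), belyiCoeff d k i * z ^ (d - i)

/-- The map `f_{a,c}(z) = a · B_{d,k}(z) + c`. -/
def belyiMap (d k : ℕ) (a c z : ℚ) : ℚ := a * belyi d k z + c

/-- `p` is an index divisor free (IDF) prime for the pair `(d,k)`:
`p` is a prime with `p > k`, `p ∣ d - r` for some `r ≤ k`, and `r ∤ v_p(d-r)`. -/
def IsIDFPrime (d k p : ℕ) : Prop :=
  p.Prime ∧ k < p ∧ ∃ r ≤ k, p ∣ (d - r) ∧ ¬ (r ∣ padicValNat p (d - r))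

/-- A rational number is `p`-integral if it is zero or has nonnegative `p`-adic valuation. -/
def PIntegral (p : ℕ) (x : ℚ) : Prop := x = 0 ∨ 0 ≤ padicValRat p x

/-!
If no prime `p > 3` is IDF for `(d, 3)`, then `d = 2^a 3^b`, every prime `p > 3` occurs in `d - 2`
to an even power and in `d - 3` to a power divisible by `3`; so `d - 2 = 2^i 3^j u²` and
`d - 3 = 2^i' 3^j' w³` with `u, w` prime to `6`. For `d = 3^b` this says `3^b - 2 = u²`, which
fails modulo `8` for even `b` and, for odd `b ≠ 1, 3`, by descent on `x² + 2 = 3y²`: its solutions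
are `(1 + √3)(2 + √3)^k`, and `y` is divisible by `3` only for `k = 3j + 1`, where
`y = 3 y_j (2 y_j² - 1)` is never a power of `3` beyond `3`. For `d = 2·3^b` it says
`w³ + 1 = 2·3^(b-1)`, impossible since `w³ + 1 = 9 (v + 1) (3v² + 3v + 1)` for `w = 3v + 2`.
For `4 ∣ d` it says `d/2 - 1 = 3^j u²`, which fails modulo `3` if `3 ∣ d` and modulo `8` if
`16 ∣ d`. What is left, `d = 8`, has the IDF prime `5`.
-/

theorem coprime_six_iff (n : ℕ) : n.Coprime 6 ↔ n % 6 = 1 ∨ n % 6 = 5 := by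
  rw [Nat.Coprime, Nat.gcd_comm, Nat.gcd_rec]
  have := Nat.mod_lt n (show 6 > 0 by norm_num)
  interval_cases n % 6 <;> simp

theorem sq_mod_twentyFour_of_coprime_six {u : ℕ} (hu : u.Coprime 6) : u ^ 2 % 24 = 1 := by
  rw [coprime_six_iff] at hu
  rw [Nat.pow_mod]
  have := Nat.mod_lt u (show 24 > 0 by norm_num)
  have h6 : u % 24 % 6 = u % 6 := Nat.mod_mod_of_dvd u (by norm_num)
  interval_cases h : u % 24 <;> omega

theorem padicValNat_mul_of_not_dvd {p m n : ℕ} [Fact p.Prime] (hm : m ≠ 0) (hn : ¬ p ∣ n) :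
    padicValNat p (m * n) = padicValNat p m := by
  rw [padicValNat.mul hm (by rintro rfl; exact hn (dvd_zero p)),
    padicValNat.eq_zero_of_not_dvd hn, add_zero]

theorem three_pow_mod_eight (j : ℕ) : 3 ^ j % 8 = 1 ∨ 3 ^ j % 8 = 3 := by
  induction j with
  | zero => simp
  | succ j ih => rw [pow_succ, Nat.mul_mod]; omega

theorem Nat.Prime.coprime_six {p : ℕ} (hp : p.Prime) (h3 : 3 < p) : p.Coprime 6 :=
  (Nat.coprime_primes hp Nat.prime_two).2 (by omega) |>.mul_right
    ((Nat.coprime_primes hp Nat.prime_three).2 (by omega))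

theorem exists_eq_two_pow_mul_three_pow_mul_pow {n c : ℕ} (hn : n ≠ 0)
    (h : ∀ p, p.Prime → 3 < p → p ∣ n → c ∣ padicValNat p n) :
    ∃ u, u.Coprime 6 ∧ n = 2 ^ padicValNat 2 n * 3 ^ padicValNat 3 n * u ^ c := by
  refine ⟨∏ p ∈ n.primeFactors with 3 < p, p ^ (n.factorization p / c), ?_, ?_⟩
  · refine Nat.Coprime.prod_left fun p hp ↦ Nat.Coprime.pow_left _ ?_
    simp only [Finset.mem_filter, Nat.mem_primeFactors] at hp
    exact hp.1.1.coprime_six hp.2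
  conv_lhs => rw [← Nat.prod_factorization_pow_eq_self hn,
    Nat.prod_factorization_eq_prod_primeFactors, ← Finset.prod_filter_not_mul_prod_filter _ (3 < ·)]
  congr 1
  · rw [Finset.prod_subset (s₂ := {2, 3}) ?_ ?_, Finset.prod_pair (by norm_num),
      Nat.factorization_def n Nat.prime_two, Nat.factorization_def n Nat.prime_three]
    · intro p hp
      simp only [Finset.mem_filter, Nat.mem_primeFactors] at hp
      have := hp.1.1.two_le
      simp only [Finset.mem_insert, Finset.mem_singleton]
      omega
    · intro p hp23 hp
      have : p ∉ n.primeFactors := fun h' ↦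
        hp (Finset.mem_filter.2 ⟨h', by simp at hp23; omega⟩)
      rw [Finsupp.notMem_support_iff.1 this, pow_zero]
  · rw [← Finset.prod_pow]
    refine Finset.prod_congr rfl fun p hp ↦ ?_
    simp only [Finset.mem_filter, Nat.mem_primeFactors] at hp
    rw [← pow_mul, Nat.div_mul_cancel (Nat.factorization_def n hp.1.1 ▸ h p hp.1.1 hp.2 hp.1.2.1)]

/-- `(pellSol k).1 + (pellSol k).2 * √3 = (1 + √3) * (2 + √3) ^ k`. -/
def pellSol : ℕ → ℤ × ℤ
  | 0 => (1, 1)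
  | k + 1 => (2 * (pellSol k).1 + 3 * (pellSol k).2, (pellSol k).1 + 2 * (pellSol k).2)

theorem pellSol_sq_add_two (k : ℕ) : (pellSol k).1 ^ 2 + 2 = 3 * (pellSol k).2 ^ 2 := by
  induction k with
  | zero => simp [pellSol]
  | succ k ih => simp only [pellSol]; linear_combination ih

theorem pellSol_add_three (k : ℕ) :
    pellSol (k + 3) = (26 * (pellSol k).1 + 45 * (pellSol k).2,
      15 * (pellSol k).1 + 26 * (pellSol k).2) := by
  simp only [pellSol, Prod.mk.injEq]
  constructor <;> ring

theorem exists_pellSol_eq {x y : ℤ} (hx : 0 ≤ x) (hy : 0 < y) (h : x ^ 2 + 2 = 3 * y ^ 2) :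
    ∃ k, pellSol k = (x, y) := by
  induction hn : y.toNat using Nat.strong_induction_on generalizing x y with
  | _ n ih =>
  obtain rfl | hy2 : y = 1 ∨ 2 ≤ y := by omega
  · exact ⟨0, by simp [pellSol]; nlinarith⟩
  -- the inverse step `(x, y) ↦ (2x - 3y, 2y - x)` stays positive and decreases `y`
  have hxy : y < x := by nlinarith
  have h3y : 3 * y < 2 * x := by nlinarith
  have h2y : x < 2 * y := by nlinarith
  obtain ⟨k, hk⟩ := ih (2 * y - x).toNat (by omega) (x := 2 * x - 3 * y) (y := 2 * y - x)
    (by omega) (by omega) (by linear_combination h) rfl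
  refine ⟨k + 1, ?_⟩
  simp only [pellSol, hk, Prod.mk.injEq]
  constructor <;> ring

theorem three_dvd_pellSol_snd_iff : ∀ k, 3 ∣ (pellSol k).2 ↔ k % 3 = 1
  | 0 | 1 | 2 => by norm_num [pellSol]
  | k + 3 => by
    rw [pellSol_add_three, Nat.add_mod_right, ← three_dvd_pellSol_snd_iff k]
    omega

theorem pellSol_three_mul_add_one (j : ℕ) :
    pellSol (3 * j + 1) = ((pellSol j).1 * (6 * (pellSol j).2 ^ 2 - 1),
      3 * (pellSol j).2 * (2 * (pellSol j).2 ^ 2 - 1)) := by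
  induction j with
  | zero => simp [pellSol]
  | succ j ih =>
    have h := pellSol_sq_add_two j
    rw [show 3 * (j + 1) + 1 = 3 * j + 1 + 3 by ring, pellSol_add_three, ih]
    simp only [pellSol, Prod.mk.injEq]
    constructor
    · linear_combination (-12 * (pellSol j).1 - 66 * (pellSol j).2) * h
    · linear_combination (-6 * (pellSol j).1 - 36 * (pellSol j).2) * h

theorem sq_add_two_ne_three_pow_two_mul_add_one (u : ℕ) {m : ℕ} (hm : 2 ≤ m) :
    u ^ 2 + 2 ≠ 3 ^ (2 * m + 1) := by
  intro h
  have hZ : (u : ℤ) ^ 2 + 2 = 3 * ((3 : ℤ) ^ m) ^ 2 := by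
    rw [← pow_mul, ← pow_succ', mul_comm m 2]; exact_mod_cast h
  obtain ⟨k, hk⟩ := exists_pellSol_eq (Int.natCast_nonneg u) (by positivity) hZ
  have hk3 : k % 3 = 1 :=
    (three_dvd_pellSol_snd_iff k).1 (by rw [hk]; exact dvd_pow_self 3 (by omega))
  obtain ⟨j, rfl⟩ : ∃ j, k = 3 * j + 1 := ⟨k / 3, by omega⟩
  obtain ⟨n, rfl⟩ : ∃ n, m = n + 1 := ⟨m - 1, by omega⟩
  set z := (pellSol j).2
  have hz : z * (2 * z ^ 2 - 1) = 3 ^ n := by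
    have hk2 := congrArg Prod.snd hk
    simp only [pellSol_three_mul_add_one] at hk2
    refine mul_left_cancel₀ three_ne_zero ?_
    rw [← pow_succ', ← hk2]
    ring
  -- `2z² - 1` is prime to `3` and divides `3 ^ n`, so it is `±1`
  have hcop : IsCoprime (2 * z ^ 2 - 1) (3 ^ n) := by
    refine IsCoprime.pow_right ((Int.prime_three.coprime_iff_not_dvd).2 ?_).symm
    intro h3
    rcases (by omega : z % 3 = 0 ∨ z % 3 = 1 ∨ z % 3 = 2) with h | h | h <;>
      simp [Int.dvd_iff_emod_eq_zero, Int.sub_emod, Int.mul_emod, pow_two, h] at h3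
  rcases Int.isUnit_iff.1 (hcop.isUnit_of_dvd' dvd_rfl ⟨z, by rw [← hz]; ring⟩) with h1 | h1
  · have : (3 : ℤ) ≤ 3 ^ n := le_self_pow₀ (by norm_num) (by omega)
    rw [h1, mul_one] at hz
    nlinarith
  · have : z = 0 := by nlinarith
    simp [this] at hz
    exact absurd hz.symm (by positivity)

theorem sq_add_two_ne_three_pow (u : ℕ) {b : ℕ} (hb : 2 ≤ b) (hb3 : b ≠ 3) :
    u ^ 2 + 2 ≠ 3 ^ b := by
  obtain ⟨m, rfl | rfl⟩ := Nat.even_or_odd' b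
  · -- squares are `0, 1, 4` and even powers of `3` are `1` modulo `8`
    intro h
    have h9 : 3 ^ (2 * m) % 8 = 1 := by rw [pow_mul, Nat.pow_mod]; norm_num
    have hu : u ^ 2 % 8 = (u % 8) ^ 2 % 8 := Nat.pow_mod u 2 8
    have := Nat.mod_lt u (show 8 > 0 by norm_num)
    interval_cases u % 8 <;> omega
  · exact sq_add_two_ne_three_pow_two_mul_add_one u (by omega)

theorem cube_add_one_ne_two_mul_three_pow (w : ℕ) {b : ℕ} (hb : 1 ≤ b) :
    w ^ 3 + 1 ≠ 2 * 3 ^ b := by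
  intro h
  have h3 : 3 ∣ 3 ^ b := dvd_pow_self 3 (by omega)
  have hw : w % 3 = 2 := by
    have hw3 : w ^ 3 % 3 = (w % 3) ^ 3 % 3 := Nat.pow_mod w 3 3
    have := Nat.mod_lt w (show 3 > 0 by norm_num)
    interval_cases w % 3 <;> omega
  obtain ⟨v, rfl⟩ : ∃ v, w = 3 * v + 2 := ⟨w / 3, by omega⟩
  -- `w³ + 1 = 9 (v + 1) c` with `c` prime to `6`, so `c ∣ 2 * 3 ^ b` forces `c = 1`
  set c := 3 * v ^ 2 + 3 * v + 1 with hc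
  have hfac : (3 * v + 2) ^ 3 + 1 = 9 * (v + 1) * c := by ring
  have hc2 : ¬ 2 ∣ c := by
    have : 2 ∣ v * (v + 1) := (Nat.even_mul_succ_self v).two_dvd
    have : c = 3 * (v * (v + 1)) + 1 := by ring
    omega
  have hcop : c.Coprime (2 * 3 ^ b) :=
    ((Nat.Prime.coprime_iff_not_dvd Nat.prime_two).2 hc2).symm.mul_right
      (((Nat.Prime.coprime_iff_not_dvd Nat.prime_three).2 (by omega)).symm.pow_right b)
  have hc1 : c = 1 := hcop.eq_one_of_dvd ⟨9 * (v + 1), by rw [← h, hfac]; ring⟩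
  have hv : v = 0 := by nlinarith
  subst hv
  omega

theorem exists_coprime_six_sub_eq_of_forall_not_isIDFPrime {d r : ℕ}
    (h : ∀ p, ¬ IsIDFPrime d 3 p) (hr : r ≤ 3) (hrd : r < d) :
    ∃ u, u.Coprime 6 ∧ d - r = 2 ^ padicValNat 2 (d - r) * 3 ^ padicValNat 3 (d - r) * u ^ r :=
  exists_eq_two_pow_mul_three_pow_mul_pow (by omega) fun p hp hp3 hpd ↦
    by_contra fun hv ↦ h p ⟨hp, hp3, r, hr, hpd, hv⟩

theorem exists_isIDFPrime_three_pow {b : ℕ} (hb : 2 ≤ b) (hb3 : b ≠ 3) :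
    ∃ p, IsIDFPrime (3 ^ b) 3 p := by
  by_contra! h
  have h9 : 9 ≤ 3 ^ b := le_trans (by norm_num) (Nat.pow_le_pow_right (by norm_num) hb)
  have h2 : 3 ^ b % 2 = 1 := Nat.odd_iff.1 (Odd.pow (by decide))
  have h3 : 3 ∣ 3 ^ b := dvd_pow_self 3 (by omega)
  obtain ⟨u, -, hu⟩ :=
    exists_coprime_six_sub_eq_of_forall_not_isIDFPrime h (by norm_num) (by omega : 2 < 3 ^ b)
  rw [padicValNat.eq_zero_of_not_dvd (by omega : ¬ 2 ∣ 3 ^ b - 2),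
    padicValNat.eq_zero_of_not_dvd (by omega : ¬ 3 ∣ 3 ^ b - 2)] at hu
  exact sq_add_two_ne_three_pow u hb hb3 (by omega)

theorem exists_isIDFPrime_two_mul_three_pow {b : ℕ} (hb : 2 ≤ b) :
    ∃ p, IsIDFPrime (2 * 3 ^ b) 3 p := by
  by_contra! h
  obtain ⟨c, rfl⟩ : ∃ c, b = c + 1 := ⟨b - 1, by omega⟩
  have h3 : 3 ∣ 3 ^ c := dvd_pow_self 3 (by omega)
  have h3c : 3 ≤ 3 ^ c := Nat.le_self_pow (by omega) 3
  rw [pow_succ] at h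
  have hd : 2 * (3 ^ c * 3) - 3 = 3 * (2 * 3 ^ c - 1) := by omega
  obtain ⟨w, -, hw⟩ := exists_coprime_six_sub_eq_of_forall_not_isIDFPrime h le_rfl (by omega)
  rw [hd, padicValNat.eq_zero_of_not_dvd (by omega : ¬ 2 ∣ 3 * (2 * 3 ^ c - 1)),
    padicValNat_mul_of_not_dvd three_ne_zero (by omega), padicValNat_self, pow_zero, pow_one,
    one_mul, Nat.mul_left_cancel_iff three_pos] at hw
  exact cube_add_one_ne_two_mul_three_pow w (show 1 ≤ c by omega) (by omega)

theorem exists_isIDFPrime_of_four_dvd {d : ℕ} (hd : d ≠ 0) (h4 : 4 ∣ d)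
    (h316 : 3 ∣ d ∨ 16 ∣ d) : ∃ p, IsIDFPrime d 3 p := by
  by_contra! h
  have hd8 : 8 ≤ d := by omega
  obtain ⟨u, hu, hdu⟩ :=
    exists_coprime_six_sub_eq_of_forall_not_isIDFPrime h (r := 2) (by norm_num) (by omega)
  have hd2 : d - 2 = 2 * (d / 2 - 1) := by omega
  rw [hd2, padicValNat_mul_of_not_dvd two_ne_zero (by omega), padicValNat_self, pow_one,
    mul_assoc, Nat.mul_left_cancel_iff two_pos] at hdu
  set j := padicValNat 3 (2 * (d / 2 - 1))
  have hu24 := sq_mod_twentyFour_of_coprime_six hu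
  rcases h316 with h3 | h16
  · rcases j with _ | j
    · rw [pow_zero, one_mul] at hdu
      omega
    · have : 3 ∣ 3 ^ (j + 1) * u ^ 2 := (dvd_pow_self 3 j.succ_ne_zero).mul_right _
      omega
  · have hu8 : u ^ 2 % 8 = 1 := by omega
    have := three_pow_mod_eight j
    have : 3 ^ j * u ^ 2 % 8 = 3 ^ j % 8 := by rw [Nat.mul_mod, hu8, mul_one, Nat.mod_mod]
    omega

theorem eq_two_pow_mul_three_pow_of_forall_not_isIDFPrime {d : ℕ} (hd : d ≠ 0)
    (h : ∀ p, ¬ IsIDFPrime d 3 p) : d = 2 ^ padicValNat 2 d * 3 ^ padicValNat 3 d := by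
  obtain ⟨_, -, hd'⟩ :=
    exists_coprime_six_sub_eq_of_forall_not_isIDFPrime h (r := 0) (by norm_num) (by omega)
  simpa using hd'

theorem isIDFPrime_eight_five : IsIDFPrime 8 3 5 :=
  ⟨by norm_num, by norm_num, 3, le_rfl, by norm_num, by simp⟩

/-- For every `d ≥ 7` with `d ≠ 27` there exists an IDF prime for
`(d, 3)`. -/
theorem exists_IDFPrime_k_eq_three (d : ℕ) (hd : 7 ≤ d) (hd27 : d ≠ 27) :
    ∃ p : ℕ, IsIDFPrime d 3 p := by
  by_contra! h
  have hd23 := eq_two_pow_mul_three_pow_of_forall_not_isIDFPrime (by omega) h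
  generalize padicValNat 2 d = a, padicValNat 3 d = b at hd23
  subst hd23
  refine not_exists.2 h ?_
  have hb2 : 3 < 3 ^ b → 2 ≤ b := fun h3 ↦
    (pow_lt_pow_iff_right₀ (by norm_num : 1 < 3)).1 (by rwa [pow_one])
  obtain rfl | rfl | ha : a = 0 ∨ a = 1 ∨ 2 ≤ a := by omega
  · simpa using exists_isIDFPrime_three_pow (hb2 (by omega)) (by rintro rfl; simp at hd27)
  · simpa using exists_isIDFPrime_two_mul_three_pow (hb2 (by omega))
  have h4 : 4 ∣ 2 ^ a * 3 ^ b := (pow_dvd_pow 2 ha).mul_right _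
  obtain rfl | hb : b = 0 ∨ 1 ≤ b := by omega
  · obtain rfl | rfl | ha4 : a = 2 ∨ a = 3 ∨ 4 ≤ a := by omega
    · norm_num at hd
    · exact ⟨5, isIDFPrime_eight_five⟩
    · exact exists_isIDFPrime_of_four_dvd (by positivity) h4
        (.inr ((pow_dvd_pow 2 ha4).mul_right _))
  · exact exists_isIDFPrime_of_four_dvd (by positivity) h4
      (.inl ((dvd_pow_self 3 (by omega)).mul_left _))
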